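/- arXiv:2410.08349 — 2 statements merged into one kernel-verified Lean document; each statement's English description precedes it below -/
import Mathlib

section
/- Let G be a finite group and let B be a set of 2-element subsets of G that is the set of bases of a matroid on ground set G and is invariant under the left-multiplication action of G on 2-element subsets. If f_{gh} ⊆ B for some g, h ∈ G, then f_g ⊆ B or f_h ⊆ B. -/
/-- The orbit `f_g = {{a, a*g} : a ∈ G}`. -/
def pairOrbit {G : Type*} [Group G] [DecidableEq G] (g : G) : Set (Finset G) :=
  {s | ∃ a : G, s = {a, a * g}}

/-- `B` is invariant under the left multiplication action of `G` on subsets. -/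
def LeftInvariant {G : Type*} [Group G] [DecidableEq G] (B : Set (Finset G)) : Prop :=
  ∀ g : G, ∀ s ∈ B, s.image (fun x => g * x) ∈ B

/-- The (strong) matroid basis exchange axiom. -/
def ExchangeAxiom {G : Type*} [DecidableEq G] (B : Set (Finset G)) : Prop :=
  ∀ X ∈ B, ∀ Y ∈ B, ∀ x ∈ X, x ∉ Y → ∃ y ∈ Y, y ∉ X ∧ insert y (X.erase x) ∈ B

lemma mem_inv_iff {G : Type*} [Group G] [DecidableEq G] {B : Set (Finset G)}
    (hinv : LeftInvariant B) (a : G) (s : Finset G) :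
    s.image (fun x => a * x) ∈ B ↔ s ∈ B := by
  constructor
  · intro hs
    have := hinv a⁻¹ _ hs
    rwa [Finset.image_image, show ((fun x => a⁻¹ * x) ∘ fun x => a * x) = id by
      funext x; simp, Finset.image_id] at this
  · exact hinv a s

lemma pair_mem_inv_iff {G : Type*} [Group G] [DecidableEq G] {B : Set (Finset G)}
    (hinv : LeftInvariant B) (a u v : G) :
    ({a * u, a * v} : Finset G) ∈ B ↔ ({u, v} : Finset G) ∈ B := by
  have := mem_inv_iff hinv a ({u, v} : Finset G)
  simpa using this

/-- If `B` is the `G`-invariant set of bases of a rank-2 matroid on a finite group `G`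
and `f_{g*h} ⊆ B`, then `f_g ⊆ B` or `f_h ⊆ B`. -/
theorem stmt_2 {G : Type*} [Group G] [Fintype G] [DecidableEq G]
    (B : Set (Finset G)) (hcard : ∀ s ∈ B, s.card = 2) (hne : B.Nonempty)
    (hinv : LeftInvariant B) (hexch : ExchangeAxiom B) (g h : G)
    (hgh : pairOrbit (g * h) ⊆ B) :
    pairOrbit g ⊆ B ∨ pairOrbit h ⊆ B := by
  by_contra hcon
  push_neg at hcon
  obtain ⟨hg, hh⟩ := hcon
  -- from ¬ pairOrbit g ⊆ B deduce {1, g} ∉ B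
  have key : ∀ k : G, ¬ pairOrbit k ⊆ B → ({1, k} : Finset G) ∉ B := by
    intro k hk hmem
    apply hk
    rintro s ⟨a, rfl⟩
    have := (pair_mem_inv_iff hinv a 1 k).mpr hmem
    simpa using this
  have h1g : ({1, g} : Finset G) ∉ B := key g hg
  have h1h : ({1, h} : Finset G) ∉ B := key h hh
  have hghB : ({1, g * h} : Finset G) ∈ B := by
    apply hgh
    exact ⟨1, by simp⟩
  have hghne : g * h ≠ 1 := by
    intro he
    have := hcard _ hghB
    rw [he] at this
    simp at this
  have hgne : g ≠ 1 := by
    rintro rfl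
    rw [one_mul] at hghB
    exact h1h hghB
  have hhne : h ≠ 1 := by
    rintro rfl
    rw [mul_one] at hghB
    exact h1g hghB
  -- {g, g*h} ∉ B
  have hggh : ({g, g * h} : Finset G) ∉ B := by
    intro hmem
    have := (pair_mem_inv_iff hinv g 1 h).mp (by simpa using hmem)
    exact h1h this
  -- find a basis containing g
  obtain ⟨X0, hX0⟩ := hne
  have hX0ne : X0.Nonempty := by
    rw [← Finset.card_pos, hcard _ hX0]; norm_num
  obtain ⟨p, hp⟩ := hX0ne
  have hY : X0.image (fun x => (g * p⁻¹) * x) ∈ B := hinv _ _ hX0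
  set Y := X0.image (fun x => (g * p⁻¹) * x) with hYdef
  have hgY : g ∈ Y := by
    rw [hYdef]
    exact Finset.mem_image.mpr ⟨p, hp, by group⟩
  obtain ⟨x, y, hxy, hYeq⟩ := Finset.card_eq_two.mp (hcard _ hY)
  -- get d with Y = {g, d}, d ≠ g
  obtain ⟨d, hdne, hYd⟩ : ∃ d : G, d ≠ g ∧ Y = {g, d} := by
    rw [hYeq] at hgY
    simp only [Finset.mem_insert, Finset.mem_singleton] at hgY
    rcases hgY with rfl | rfl
    · exact ⟨y, fun he => hxy he.symm, hYeq⟩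
    · exact ⟨x, fun he => hxy he, by rw [hYeq, Finset.pair_comm]⟩
  have hd1 : d ≠ 1 := by
    rintro rfl
    rw [hYd, Finset.pair_comm] at hY
    exact h1g hY
  have hdgh : d ≠ g * h := by
    rintro rfl
    rw [hYd] at hY
    exact hggh hY
  have hdY : d ∈ Y := by rw [hYd]; simp
  have hdnot : d ∉ ({1, g * h} : Finset G) := by
    simp [hd1, hdgh]
  obtain ⟨z, hzmem, hznot, hzB⟩ := hexch Y hY _ hghB d hdY hdnot
  have hYerase : Y.erase d = {g} := by
    rw [hYd]
    rw [Finset.pair_comm, Finset.erase_insert (by simpa using hdne)]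
  rw [hYerase] at hzB
  simp only [Finset.mem_insert, Finset.mem_singleton] at hzmem
  rcases hzmem with rfl | rfl
  · exact h1g hzB
  · rw [Finset.pair_comm] at hzB
    exact hggh hzB
end

section
/- Let u be a unit in Z_n and let f_{i,j} = {{a, a+i, a+j} : a ∈ Z_n} be a translation orbit of 3-element subsets with 0 < i < j < n. Then there exist integers 0 < s < t < n with f_{su, tu} = f_{i,j} and 3s ≤ n. -/
/-- The translation orbit `f_{i,j} = {{a, a+i, a+j} : a ∈ Z_n}`. -/
def tripleOrbitZ (n : ℕ) (i j : ZMod n) : Set (Finset (ZMod n)) :=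
  {s | ∃ a : ZMod n, s = {a, a + i, a + j}}

lemma orbit_eq_of_translate {n : ℕ} (x y i j c : ZMod n)
    (h : ({c, c + x, c + y} : Finset (ZMod n)) = {0, i, j}) :
    tripleOrbitZ n x y = tripleOrbitZ n i j := by
  have key : ∀ a : ZMod n,
      ({a + c, a + c + x, a + c + y} : Finset (ZMod n)) = {a, a + i, a + j} := by
    intro a
    have h2 := congrArg (Finset.image (a + ·)) h
    simpa [Finset.image_insert, Finset.image_singleton, add_assoc] using h2
  ext S
  simp only [tripleOrbitZ, Set.mem_setOf_eq]
  constructor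
  · rintro ⟨a, rfl⟩
    refine ⟨a - c, ?_⟩
    have h3 := key (a - c)
    rw [sub_add_cancel] at h3
    exact h3
  · rintro ⟨b, rfl⟩
    exact ⟨b + c, (key b).symm⟩

lemma orbit_swap {n : ℕ} (x y : ZMod n) : tripleOrbitZ n x y = tripleOrbitZ n y x := by
  ext S
  simp only [tripleOrbitZ, Set.mem_setOf_eq]
  constructor <;> rintro ⟨a, rfl⟩ <;>
    exact ⟨a, by rw [Finset.pair_comm]⟩

lemma key_lemma (n : ℕ) [NeZero n] (u : (ZMod n)ˣ) (P Q : ZMod n) (hP : P ≠ 0) (hQ : Q ≠ 0)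
    (hpq : P.val < Q.val) :
    ∃ s t : ℕ, 0 < s ∧ s < t ∧ t < n ∧
      tripleOrbitZ n ((s : ZMod n) * u) ((t : ZMod n) * u) =
        tripleOrbitZ n (P * u) (Q * u) ∧
      3 * s ≤ n := by
  have hcP : ((P.val : ℕ) : ZMod n) = P := ZMod.natCast_rightInverse P
  have hcQ : ((Q.val : ℕ) : ZMod n) = Q := ZMod.natCast_rightInverse Q
  have hp0 : 0 < P.val := Nat.pos_of_ne_zero (fun h => hP (by rwa [← ZMod.val_eq_zero]))
  have hqn : Q.val < n := ZMod.val_lt Q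
  have hpn : P.val < n := ZMod.val_lt P
  rcases le_or_gt (3 * P.val) n with h1 | h1
  · exact ⟨P.val, Q.val, hp0, hpq, hqn, by rw [hcP, hcQ], h1⟩
  rcases le_or_gt (3 * (Q.val - P.val)) n with h2 | h2
  · refine ⟨Q.val - P.val, n - P.val, by omega, by omega, by omega, ?_, h2⟩
    have hx : ((Q.val - P.val : ℕ) : ZMod n) = Q - P := by
      rw [Nat.cast_sub hpq.le, hcP, hcQ]
    have hy : ((n - P.val : ℕ) : ZMod n) = -P := by
      rw [Nat.cast_sub hpn.le, hcP, ZMod.natCast_self, zero_sub]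
    rw [hx, hy]
    apply orbit_eq_of_translate _ _ _ _ (P * (u : ZMod n))
    have e1 : P * (↑u : ZMod n) + (Q - P) * ↑u = Q * ↑u := by ring
    have e2 : P * (↑u : ZMod n) + (-P) * ↑u = 0 := by ring
    rw [e1, e2]
    ext z
    simp only [Finset.mem_insert, Finset.mem_singleton]
    tauto
  · refine ⟨n - Q.val, n - (Q.val - P.val), by omega, by omega, by omega, ?_, by omega⟩
    have hx : ((n - Q.val : ℕ) : ZMod n) = -Q := by
      rw [Nat.cast_sub hqn.le, hcQ, ZMod.natCast_self, zero_sub]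
    have hy : ((n - (Q.val - P.val) : ℕ) : ZMod n) = P - Q := by
      rw [Nat.cast_sub (by omega : Q.val - P.val ≤ n), Nat.cast_sub hpq.le, hcP, hcQ,
        ZMod.natCast_self]
      ring
    rw [hx, hy]
    apply orbit_eq_of_translate _ _ _ _ (Q * (u : ZMod n))
    have e1 : Q * (↑u : ZMod n) + (-Q) * ↑u = 0 := by ring
    have e2 : Q * (↑u : ZMod n) + (P - Q) * ↑u = P * ↑u := by ring
    rw [e1, e2]
    ext z
    simp only [Finset.mem_insert, Finset.mem_singleton]
    tauto

/-- For a unit `u` of `Z_n` and an orbit `f_{i,j}` with `0 < i < j < n`, there exist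
`0 < s < t < n` with `f_{s*u, t*u} = f_{i,j}` and `3*s ≤ n`. -/
theorem stmt_16 (n : ℕ) (u : (ZMod n)ˣ) (i j : ℕ) (hi : 0 < i) (hij : i < j) (hj : j < n) :
    ∃ s t : ℕ, 0 < s ∧ s < t ∧ t < n ∧
      tripleOrbitZ n ((s : ZMod n) * u) ((t : ZMod n) * u) =
        tripleOrbitZ n (i : ZMod n) (j : ZMod n) ∧
      3 * s ≤ n := by
  haveI : NeZero n := ⟨by omega⟩
  set A : ZMod n := (i : ZMod n) * ↑u⁻¹ with hA
  set B : ZMod n := (j : ZMod n) * ↑u⁻¹ with hB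
  have hu : (↑u⁻¹ : ZMod n) * ↑u = 1 := u.inv_mul
  have hAu : A * ↑u = (i : ZMod n) := by rw [hA, mul_assoc, hu, mul_one]
  have hBu : B * ↑u = (j : ZMod n) := by rw [hB, mul_assoc, hu, mul_one]
  have hiv : ((i : ZMod n)).val = i := ZMod.val_cast_of_lt (by omega)
  have hjv : ((j : ZMod n)).val = j := ZMod.val_cast_of_lt hj
  have hA0 : A ≠ 0 := by
    intro h
    apply_fun (· * (↑u : ZMod n)) at h
    rw [hAu, zero_mul] at h
    have h2 := congrArg ZMod.val h
    rw [hiv, ZMod.val_zero] at h2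
    omega
  have hB0 : B ≠ 0 := by
    intro h
    apply_fun (· * (↑u : ZMod n)) at h
    rw [hBu, zero_mul] at h
    have h2 := congrArg ZMod.val h
    rw [hjv, ZMod.val_zero] at h2
    omega
  have hAB : A.val ≠ B.val := by
    intro h
    have h3 : A = B := ZMod.val_injective n h
    apply_fun (· * (↑u : ZMod n)) at h3
    rw [hAu, hBu] at h3
    have h2 := congrArg ZMod.val h3
    rw [hiv, hjv] at h2
    omega
  rcases lt_or_gt_of_ne hAB with hlt | hgt
  · obtain ⟨s, t, h1, h2, h3, h4, h5⟩ := key_lemma n u A B hA0 hB0 hlt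
    rw [hAu, hBu] at h4
    exact ⟨s, t, h1, h2, h3, h4, h5⟩
  · obtain ⟨s, t, h1, h2, h3, h4, h5⟩ := key_lemma n u B A hB0 hA0 hgt
    rw [hAu, hBu] at h4
    exact ⟨s, t, h1, h2, h3, h4.trans (orbit_swap _ _), h5⟩
end
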